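/- Let X be a finite (q+1)-regular non-bipartite Ramanujan graph on n vertices. Then for every ε > 0, for n large enough, the diameter of X is at most (2+ε)·log_q(n). -/

import Mathlib

open scoped Classical
open Filter Matrix Asymptotics

/-!
Let `A` be the adjacency matrix of the graph and `A_k = chebU q A k`, so that `A_0 = 1`, `A_1 = A`
and `A_(k+2) = A A_(k+1) - q A_k`. Being a polynomial of degree `k` in `A`, `A_k` vanishes at
`(x, y)` whenever `dist x y > k`. On the other hand, expanding in an orthonormal eigenbasis,
`A_k x y = ∑ᵢ chebU q λᵢ k · bᵢ x · bᵢ y`. By connectivity the eigenvectors for `q + 1` are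
constant, so each contributes at least `q ^ k / n`; every other eigenvalue satisfies `|λ| ≤ 2√q`, whence
`|chebU q λ k| ≤ (k + 1) √q ^ k`, and since the rows of the orthogonal matrix `(bᵢ x)` are unit
vectors these terms contribute at most `(k + 1) √q ^ k` in total. So `A_k x y > 0`, forcing
`dist x y ≤ k`, as soon as `(k + 1) n < √q ^ k`, which holds for some `k ≤ (2 + ε) log_q n`
once `n` is large.
-/

/-- `chebU q a k = √q ^ k U_k (a / (2√q))`, with `U_k` the Chebyshev polynomial of the second
kind. -/
noncomputable def chebU {R : Type*} [Ring R] (q a : R) : ℕ → R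
  | 0 => 1
  | 1 => a
  | k + 2 => a * chebU q a (k + 1) - q * chebU q a k

section chebU

variable {R S : Type*} [Ring R] [Ring S]

@[simp] lemma chebU_zero (q a : R) : chebU q a 0 = 1 := rfl
@[simp] lemma chebU_one (q a : R) : chebU q a 1 = a := rfl
lemma chebU_add_two (q a : R) (k : ℕ) :
    chebU q a (k + 2) = a * chebU q a (k + 1) - q * chebU q a k := rfl

lemma map_chebU {F : Type*} [FunLike F R S] [RingHomClass F R S] (f : F) (q a : R) (k : ℕ) :
    f (chebU q a k) = chebU (f q) (f a) k := by
  induction k using Nat.twoStepInduction with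
  | zero => simp
  | one => simp
  | more k ih₀ ih₁ => simp [chebU_add_two, ih₀, ih₁]

lemma chebU_sq_sub_add (q l : ℝ) (k : ℕ) :
    chebU q l (k + 1) ^ 2 - l * chebU q l (k + 1) * chebU q l k + q * chebU q l k ^ 2
      = q ^ (k + 1) := by
  induction k with
  | zero => simp; ring
  | succ k ih => rw [chebU_add_two, pow_succ]; linear_combination q * ih

lemma abs_chebU_le {q l : ℝ} (hq : 0 ≤ q) (hl : |l| ≤ 2 * √q) (k : ℕ) :
    |chebU q l k| ≤ (k + 1) * √q ^ k := by
  have hs : √q ^ 2 = q := Real.sq_sqrt hq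
  have step (k : ℕ) : |chebU q l (k + 1)| ≤ √q * |chebU q l k| + √q ^ (k + 1) := by
    set a := chebU q l (k + 1)
    set b := chebU q l k
    -- the energy identity says `(|a| - √q |b|)^2 ≤ q^(k+1)` once `|l| ≤ 2√q`
    have hlab : l * a * b ≤ 2 * √q * (|a| * |b|) := by
      calc l * a * b ≤ |l| * (|a| * |b|) := by
            rw [← abs_mul, ← abs_mul, ← mul_assoc]; exact le_abs_self _
        _ ≤ 2 * √q * (|a| * |b|) := by gcongr
    have hsq : (|a| - √q * |b|) ^ 2 ≤ (√q ^ (k + 1)) ^ 2 := by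
      rw [← pow_mul, mul_comm (k + 1), pow_mul, hs, ← chebU_sq_sub_add q l k]
      nlinarith [sq_abs a, sq_abs b]
    nlinarith [abs_le_of_sq_le_sq' hsq (by positivity)]
  induction k with
  | zero => simp
  | succ k ih =>
    calc |chebU q l (k + 1)| ≤ √q * |chebU q l k| + √q ^ (k + 1) := step k
      _ ≤ √q * ((k + 1) * √q ^ k) + √q ^ (k + 1) := by gcongr
      _ = (↑(k + 1) + 1) * √q ^ (k + 1) := by push_cast; ring

lemma pow_le_chebU_add_one {q : ℝ} (hq : 0 ≤ q) (k : ℕ) : q ^ k ≤ chebU q (q + 1) k := by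
  have hsucc (k : ℕ) : chebU q (q + 1) (k + 1) = q * chebU q (q + 1) k + 1 := by
    induction k with
    | zero => simp
    | succ k ih => rw [chebU_add_two]; linear_combination ih
  induction k with
  | zero => simp
  | succ k ih => rw [hsucc, pow_succ']; nlinarith

end chebU

variable {V : Type*} [Fintype V]

lemma chebU_diagonal (q : ℕ) (d : V → ℝ) (k : ℕ) :
    chebU (q : Matrix V V ℝ) (diagonal d) k = diagonal fun i ↦ chebU (q : ℝ) (d i) k := by
  change chebU _ (diagonalRingHom V ℝ d) k = _
  rw [← map_natCast (diagonalRingHom V ℝ) q, ← map_chebU, diagonalRingHom_apply]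
  congr 1
  funext i
  simpa using map_chebU (Pi.evalRingHom (fun _ : V ↦ ℝ) i) (q : V → ℝ) d k

lemma Matrix.IsHermitian.chebU_apply {A : Matrix V V ℝ} (hA : A.IsHermitian) (q k : ℕ)
    (x y : V) : chebU (q : Matrix V V ℝ) A k x y = ∑ i,
      chebU (q : ℝ) (hA.eigenvalues i) k * hA.eigenvectorBasis i x * hA.eigenvectorBasis i y := by
  conv_lhs => rw [hA.spectral_theorem]
  rw [← map_natCast (Unitary.conjStarAlgAut ℝ _ hA.eigenvectorUnitary) q,
    ← map_chebU, chebU_diagonal, Unitary.conjStarAlgAut_apply, mul_apply]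
  simp [mul_diagonal, mul_comm]

lemma OrthonormalBasis.sum_sq_apply {ι : Type*} [Fintype ι]
    (b : OrthonormalBasis ι ℝ (EuclideanSpace ℝ V)) (v : V) :
    ∑ i, b i v ^ 2 = 1 := by
  simpa [sq, EuclideanSpace.inner_single_left, EuclideanSpace.inner_single_right] using
    b.sum_inner_mul_inner (EuclideanSpace.single v 1) (EuclideanSpace.single v 1)

lemma OrthonormalBasis.sum_apply_sq {ι : Type*} [Fintype ι]
    (b : OrthonormalBasis ι ℝ (EuclideanSpace ℝ V)) (i : ι) :
    ∑ v, b i v ^ 2 = 1 := by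
  rw [← EuclideanSpace.real_norm_sq_eq, b.orthonormal.1 i, one_pow]

lemma OrthonormalBasis.sum_abs_mul_abs_le_one {ι : Type*} [Fintype ι]
    (b : OrthonormalBasis ι ℝ (EuclideanSpace ℝ V)) (x y : V) :
    ∑ i, |b i x| * |b i y| ≤ 1 := by
  have hamgm (i : ι) : |b i x| * |b i y| ≤ (b i x ^ 2 + b i y ^ 2) / 2 := by
    nlinarith [sq_nonneg (|b i x| - |b i y|), sq_abs (b i x), sq_abs (b i y)]
  calc ∑ i, |b i x| * |b i y| ≤ ∑ i, (b i x ^ 2 + b i y ^ 2) / 2 :=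
        Finset.sum_le_sum fun i _ ↦ hamgm i
    _ = 1 := by
      rw [← Finset.sum_div, Finset.sum_add_distrib, b.sum_sq_apply, b.sum_sq_apply]; norm_num

namespace SimpleGraph

variable {G : SimpleGraph V}

-- `μ` ranges over the eigenvalues of the normalized adjacency operator `A / (q + 1)`.
def IsRamanujan (G : SimpleGraph V) (q : ℕ) : Prop :=
  ∀ (μ : ℝ) (f : V → ℝ), f ≠ 0 →
    (∀ x, ∑ y ∈ G.neighborFinset x, f y = ((q : ℝ) + 1) * μ * f x) →
    μ = 1 ∨ |μ| ≤ 2 * Real.sqrt q / ((q : ℝ) + 1)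

lemma chebU_adjMatrix_apply_eq_zero_of_lt_dist {R : Type*} [Ring R] (G : SimpleGraph V) (q : ℕ)
    {k : ℕ} {x y : V} (h : k < G.dist x y) :
    chebU (q : Matrix V V R) (G.adjMatrix R) k x y = 0 := by
  induction k using Nat.strong_induction_on generalizing x y with
  | _ k ih =>
  match k with
  | 0 => exact one_apply_ne (by rintro rfl; simp at h)
  | 1 =>
    have : ¬ G.Adj x y := by rw [← dist_eq_one_iff_adj]; omega
    simp [this]
  | k + 2 =>
    have hnbr (u : V) (hu : u ∈ G.neighborFinset x) :
        chebU (q : Matrix V V R) (G.adjMatrix R) (k + 1) u y = 0 := by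
      rw [mem_neighborFinset] at hu
      apply ih _ (by omega)
      have := hu.reachable.dist_triangle_left y
      rw [dist_eq_one_iff_adj.mpr hu] at this
      omega
    have hk := ih k (by omega) (x := x) (y := y) (by omega)
    rw [chebU_add_two, Matrix.sub_apply, adjMatrix_mul_apply, Finset.sum_eq_zero hnbr,
      ← nsmul_eq_mul, Matrix.smul_apply, hk]
    simp

lemma Connected.apply_eq_of_adjMatrix_mulVec_eq {d : ℕ} (hc : G.Connected)
    (hreg : G.IsRegularOfDegree d) {f : V → ℝ}
    (hf : G.adjMatrix ℝ *ᵥ f = (d : ℝ) • f) (x y : V) : f x = f y := by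
  have hlap : G.lapMatrix ℝ *ᵥ f = 0 := by
    ext v
    simp [lapMatrix, sub_mulVec, degMatrix_mulVec_apply, hf, hreg v]
  exact (lapMatrix_mulVec_eq_zero_iff_forall_reachable G).mp hlap x y (hc x y)

lemma IsRamanujan.eigenvalues_eq_or_abs_le {q : ℕ} (hG : G.IsRamanujan q)
    (hA : (G.adjMatrix ℝ).IsHermitian) (i : V) :
    hA.eigenvalues i = q + 1 ∨ |hA.eigenvalues i| ≤ 2 * √q := by
  have hq : (0 : ℝ) < q + 1 := by positivity
  have hne : (hA.eigenvectorBasis i : V → ℝ) ≠ 0 := fun h ↦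
    hA.eigenvectorBasis.orthonormal.ne_zero i (by ext v; exact congrFun h v)
  have heig (x : V) : ∑ y ∈ G.neighborFinset x, hA.eigenvectorBasis i y =
      (q + 1) * (hA.eigenvalues i / (q + 1)) * hA.eigenvectorBasis i x := by
    rw [← adjMatrix_mulVec_apply, hA.mulVec_eigenvectorBasis, mul_div_cancel₀ _ hq.ne']
    rfl
  rcases hG _ _ hne heig with h | h
  · left; rwa [div_eq_one_iff_eq hq.ne'] at h
  · right; rwa [abs_div, abs_of_pos hq, div_le_div_iff_of_pos_right hq] at h

lemma IsRegularOfDegree.exists_eigenvalues_eq [Nonempty V] {d : ℕ} (hreg : G.IsRegularOfDegree d)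
    (hA : (G.adjMatrix ℝ).IsHermitian) : ∃ i, hA.eigenvalues i = d := by
  have hd : (d : ℝ) ∈ spectrum ℝ (G.adjMatrix ℝ) := by
    rw [← Matrix.spectrum_toLin']
    refine (Module.End.hasEigenvalue_of_hasEigenvector
      (x := fun _ ↦ 1) ⟨?_, one_ne_zero⟩).mem_spectrum
    rw [Module.End.mem_eigenspace_iff, toLin'_apply]
    ext v
    simp [hreg v]
  rwa [hA.spectrum_real_eq_range_eigenvalues] at hd

lemma Connected.eigenvectorBasis_mul_eigenvectorBasis {d : ℕ} (hc : G.Connected)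
    (hreg : G.IsRegularOfDegree d) (hA : (G.adjMatrix ℝ).IsHermitian) {i : V}
    (hi : hA.eigenvalues i = d) (x y : V) :
    hA.eigenvectorBasis i x * hA.eigenvectorBasis i y = 1 / Fintype.card V := by
  have hconst (v : V) : hA.eigenvectorBasis i v = hA.eigenvectorBasis i x :=
    hc.apply_eq_of_adjMatrix_mulVec_eq hreg (hi ▸ hA.mulVec_eigenvectorBasis i) v x
  have hnorm := hA.eigenvectorBasis.sum_apply_sq i
  simp only [hconst, Finset.sum_const, Finset.card_univ, nsmul_eq_mul] at hnorm
  rw [hconst y, ← sq]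
  exact eq_one_div_of_mul_eq_one_right hnorm

theorem IsRamanujan.dist_le {q K : ℕ} (hG : G.IsRamanujan q) (hc : G.Connected)
    (hreg : G.IsRegularOfDegree (q + 1)) (hK : (K + 1) * Fintype.card V < √q ^ K) (x y : V) :
    G.dist x y ≤ K := by
  by_contra! hlt
  have hA := G.isHermitian_adjMatrix ℝ
  have := hc.nonempty
  set b := hA.eigenvectorBasis
  set c := fun i ↦ chebU (q : ℝ) (hA.eigenvalues i) K
  set B := (K + 1 : ℝ) * √q ^ K
  set n := (Fintype.card V : ℝ)
  have hn : 0 < n := by positivity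
  have hzero : ∑ i, c i * b i x * b i y = 0 := by
    rw [← hA.chebU_apply]; exact chebU_adjMatrix_apply_eq_zero_of_lt_dist G q hlt
  have htop {i : V} (hi : hA.eigenvalues i = q + 1) : (q : ℝ) ^ K / n ≤ c i * b i x * b i y := by
    rw [mul_assoc, hc.eigenvectorBasis_mul_eigenvectorBasis hreg hA (by rw [hi]; push_cast; rfl)]
    simp only [c, hi]
    rw [mul_one_div]
    gcongr
    exact pow_le_chebU_add_one (by positivity) K
  have hterm (i : V) : 0 ≤ c i * b i x * b i y + B * (|b i x| * |b i y|) := by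
    rcases hG.eigenvalues_eq_or_abs_le hA i with hi | hi
    · have : 0 ≤ (q : ℝ) ^ K / n := by positivity
      linarith [htop hi, show 0 ≤ B * (|b i x| * |b i y|) by positivity]
    · have hci := abs_chebU_le (by positivity) hi K
      have : |c i * b i x * b i y| ≤ B * (|b i x| * |b i y|) := by
        rw [abs_mul, abs_mul, mul_assoc]; gcongr
      linarith [neg_abs_le (c i * b i x * b i y)]
  obtain ⟨i₀, hi₀⟩ := hreg.exists_eigenvalues_eq hA
  have hB : (q : ℝ) ^ K / n ≤ B :=
    calc (q : ℝ) ^ K / n ≤ c i₀ * b i₀ x * b i₀ y + B * (|b i₀ x| * |b i₀ y|) :=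
          le_add_of_le_of_nonneg (htop (by rw [hi₀]; push_cast; rfl)) (by positivity)
      _ ≤ ∑ i, (c i * b i x * b i y + B * (|b i x| * |b i y|)) :=
          Finset.single_le_sum (fun i _ ↦ hterm i) (Finset.mem_univ i₀)
      _ = B * ∑ i, |b i x| * |b i y| := by
          rw [Finset.sum_add_distrib, hzero, ← Finset.mul_sum, zero_add]
      _ ≤ B := mul_le_of_le_one_right (by positivity) (b.sum_abs_mul_abs_le_one x y)
  have hq : (q : ℝ) ^ K = √q ^ K * √q ^ K := by rw [← mul_pow, Real.mul_self_sqrt (by positivity)]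
  rw [div_le_iff₀ hn, hq] at hB
  have hs : 0 < √q ^ K := lt_of_le_of_lt (by positivity) hK
  have hBn : B * n = √q ^ K * ((K + 1) * n) := by simp only [B]; ring
  linarith [mul_lt_mul_of_pos_left hK hs]

end SimpleGraph

lemma eventually_mul_logb_add_lt_rpow (q : ℝ) {a b r : ℝ} (hr : 0 < r) :
    ∀ᶠ x : ℝ in atTop, a * Real.logb q x + b < x ^ r := by
  have hsmall : (fun x ↦ a * Real.logb q x + b) =o[atTop] fun x ↦ x ^ r := by
    have hlog := (isLittleO_log_rpow_atTop hr).const_mul_left (a / Real.log q)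
    have hconst : (fun _ : ℝ ↦ b) =o[atTop] fun x ↦ x ^ r :=
      isLittleO_const_left.mpr (.inr (tendsto_norm_atTop_atTop.comp (tendsto_rpow_atTop hr)))
    refine (hlog.add hconst).congr_left fun x ↦ ?_
    rw [Real.logb, mul_div_assoc', div_mul_eq_mul_div]
  filter_upwards [hsmall.eventuallyLT_norm_of_eventually_pos
      ((eventually_gt_atTop 0).mono fun x hx ↦ norm_pos_iff.mpr (Real.rpow_pos_of_pos hx r).ne'),
    eventually_gt_atTop 0] with x hlt hx
  rw [Real.norm_eq_abs, Real.norm_eq_abs, abs_of_pos (Real.rpow_pos_of_pos hx r)] at hlt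
  exact (le_abs_self _).trans_lt hlt

lemma eventually_exists_le_logb_and_lt_sqrt_pow {q : ℝ} (hq : 1 < q) {ε : ℝ} (hε : 0 < ε) :
    ∀ᶠ n : ℕ in atTop, ∃ K : ℕ, (K : ℝ) ≤ (2 + ε) * Real.logb q n ∧ (K + 1) * n < √q ^ K := by
  filter_upwards [tendsto_natCast_atTop_atTop.eventually
      (eventually_mul_logb_add_lt_rpow q (a := (2 + ε) * √q) (b := √q) (half_pos hε)),
    eventually_ge_atTop 1] with n hsmall hn
  have hn : (1 : ℝ) ≤ n := by exact_mod_cast hn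
  set L := Real.logb q n
  have hL : 0 ≤ L := Real.logb_nonneg hq hn
  set K := ⌊(2 + ε) * L⌋₊
  have hK : (2 + ε) * L < K + 1 := Nat.lt_floor_add_one _
  have hs : 0 < √q := Real.sqrt_pos.mpr (by linarith)
  have hpow : n * (n : ℝ) ^ (ε / 2) < √q ^ K * √q :=
    calc n * (n : ℝ) ^ (ε / 2) = q ^ (L * (1 + ε / 2)) := by
          rw [Real.rpow_mul (by linarith), Real.rpow_logb (by linarith) hq.ne' (by linarith),
            Real.rpow_add (by linarith), Real.rpow_one]
      _ < q ^ (1 / 2 * ((K + 1 : ℕ) : ℝ)) := by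
          rw [Real.rpow_lt_rpow_left_iff hq]; push_cast; linarith
      _ = √q ^ K * √q := by
          rw [Real.rpow_mul (by linarith), ← Real.sqrt_eq_rpow, Real.rpow_natCast, pow_succ]
  have hKL : (K : ℝ) ≤ (2 + ε) * L := Nat.floor_le (by positivity)
  refine ⟨K, hKL, ?_⟩
  have hKs : (K + 1) * √q < (n : ℝ) ^ (ε / 2) := by nlinarith
  nlinarith

theorem stmt6_general (q : ℕ) (hq : 2 ≤ q) (V : ℕ → Type) [∀ m, Fintype (V m)]
    (G : ∀ m, SimpleGraph (V m))
    (hreg : ∀ m, (G m).IsRegularOfDegree (q + 1))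
    (hconn : ∀ m, (G m).Connected)
    (hcard : Tendsto (fun m => Fintype.card (V m)) atTop atTop)
    (hram : ∀ m (μ : ℝ) (f : V m → ℝ), f ≠ 0 →
      (∀ x, ∑ y ∈ (G m).neighborFinset x, f y = ((q : ℝ) + 1) * μ * f x) →
      μ = 1 ∨ |μ| ≤ 2 * Real.sqrt q / ((q : ℝ) + 1)) :
    ∀ ε : ℝ, 0 < ε → ∀ᶠ m in atTop, ∀ x y : V m,
      ((G m).dist x y : ℝ) ≤ (2 + ε) * Real.logb q (Fintype.card (V m)) := by
  intro ε hε
  filter_upwards [hcard.eventually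
    (eventually_exists_le_logb_and_lt_sqrt_pow (Nat.one_lt_cast.mpr hq) hε)] with m ⟨K, hKL, hK⟩ x y
  have hdist := SimpleGraph.IsRamanujan.dist_le (hram m) (hconn m) (hreg m) hK x y
  exact (Nat.cast_le.mpr hdist).trans hKL

/-- In a family of `(q+1)`-regular non-bipartite Ramanujan graphs with
`n → ∞`, for every `ε > 0` and all `n` large enough, the diameter is at most
`(2+ε) log_q n`. -/
theorem stmt6 (q : ℕ) (hq : 2 ≤ q) (V : ℕ → Type) [∀ m, Fintype (V m)]
    (G : ∀ m, SimpleGraph (V m))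
    (hreg : ∀ m, (G m).IsRegularOfDegree (q + 1))
    (hconn : ∀ m, (G m).Connected)
    (hnb : ∀ m, ¬ (G m).Colorable 2)
    (hcard : Tendsto (fun m => Fintype.card (V m)) atTop atTop)
    (hram : ∀ m (μ : ℝ) (f : V m → ℝ), f ≠ 0 →
      (∀ x, ∑ y ∈ (G m).neighborFinset x, f y = ((q : ℝ) + 1) * μ * f x) →
      μ = 1 ∨ |μ| ≤ 2 * Real.sqrt q / ((q : ℝ) + 1)) :
    ∀ ε : ℝ, 0 < ε → ∀ᶠ m in atTop, ∀ x y : V m,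
      ((G m).dist x y : ℝ) ≤ (2 + ε) * Real.logb q (Fintype.card (V m)) :=
  stmt6_general q hq V G hreg hconn hcard hram
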